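/- Let J ≥ 3 be an integer, λ > 0 and s > 0, and let X_1, …, X_J be i.i.d. random variables each having the exponential distribution with rate λ. Set S := X_1 + ⋯ + X_J and M := max_i X_i. Then P( S·(S + s)/(2M) − S > s·(5/4 − J/2) ) ≥ 1 − J·(1/2)^{J−1}·e^{−λs}. -/

import Mathlib

/-!
The inequality can fail only if `2M > S + s`, i.e. only if some `X_i` exceeds the sum `T_i` of the
others by more than `s`: otherwise `S(S+s)/(2M) ≥ S`, while `s(5/4 - J/2) < 0` for `J ≥ 3`.
Since `T_i` is independent of `X_i ~ Exp(λ)`, the exponential tail gives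
`P(X_i > T_i + s) ≤ E[e^{-λ(T_i + s)}] = (λ/(λ+λ))^{J-1} e^{-λs}`, and a union bound over `i`
finishes the proof.
-/

open MeasureTheory ProbabilityTheory Real Set Finset

namespace ProbabilityTheory

variable {l : ℝ}

lemma ae_expMeasure_pos (hl : 0 < l) : ∀ᵐ x ∂expMeasure l, 0 < x := by
  have := isProbabilityMeasure_expMeasure hl
  have hIic : expMeasure l (Iic 0) = 0 := by
    rw [← ofReal_cdf, cdf_expMeasure_eq hl]
    simp
  rw [ae_iff]
  simp only [not_lt]
  exact hIic

lemma expMeasure_Ioi_le (hl : 0 < l) (a : ℝ) :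
    expMeasure l (Ioi a) ≤ ENNReal.ofReal (exp (-(l * a))) := by
  have := isProbabilityMeasure_expMeasure hl
  rw [← compl_Iic, prob_compl_eq_one_sub measurableSet_Iic, ← ofReal_cdf,
    cdf_expMeasure_eq hl]
  split_ifs with ha
  · have he : exp (-(l * a)) ≤ 1 := exp_le_one_iff.2 (by nlinarith)
    rw [← ENNReal.ofReal_one, ← ENNReal.ofReal_sub _ (by linarith)]
    simp
  · calc 1 - ENNReal.ofReal 0 = ENNReal.ofReal 1 := by simp
      _ ≤ _ := ENNReal.ofReal_le_ofReal (one_le_exp (by nlinarith))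

lemma lintegral_exp_neg_mul_expMeasure (hl : 0 < l) {t : ℝ} (ht : 0 < l + t) :
    ∫⁻ x, ENNReal.ofReal (exp (-(t * x))) ∂expMeasure l = ENNReal.ofReal (l / (l + t)) := by
  have hpdf (x : ℝ) : exponentialPDF l x * ENNReal.ofReal (exp (-(t * x)))
      = ENNReal.ofReal (l / (l + t)) * exponentialPDF (l + t) x := by
    rcases le_or_gt 0 x with hx | hx
    · rw [exponentialPDF_of_nonneg hx, exponentialPDF_of_nonneg hx,
        ← ENNReal.ofReal_mul (by positivity), ← ENNReal.ofReal_mul (by positivity)]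
      congr 1
      rw [mul_assoc, ← exp_add, ← mul_assoc, div_mul_cancel₀ _ ht.ne']
      ring_nf
    · simp [exponentialPDF_of_neg hx]
  have hmeas : Measurable (exponentialPDF l) := (measurable_exponentialPDFReal l).ennreal_ofReal
  change ∫⁻ x, _ ∂volume.withDensity (exponentialPDF l) = _
  rw [lintegral_withDensity_eq_lintegral_mul _ hmeas (by fun_prop)]
  simp only [Pi.mul_apply, hpdf]
  rw [lintegral_const_mul' _ _ ENNReal.ofReal_ne_top,
    lintegral_exponentialPDF_eq_one ht, mul_one]

section Independent

variable {Ω : Type*} [MeasurableSpace Ω] {P : Measure Ω}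

lemma lintegral_exp_neg_mul_sum_of_iIndepFun {ι : Type*} {X : ι → Ω → ℝ}
    (hX : ∀ i, Measurable (X i)) (hindep : iIndepFun X P) (t : ℝ) (s : Finset ι) :
    ∫⁻ ω, ENNReal.ofReal (exp (-(t * ∑ j ∈ s, X j ω))) ∂P
      = ∏ j ∈ s, ∫⁻ ω, ENNReal.ofReal (exp (-(t * X j ω))) ∂P := by
  have hφ : Measurable fun x : ℝ => ENNReal.ofReal (exp (-(t * x))) := by fun_prop
  rw [← lintegral_prod_eq_prod_lintegral_of_indepFun s
    (fun j ω => ENNReal.ofReal (exp (-(t * X j ω)))) (hindep.comp _ fun _ => hφ)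
    fun j => hφ.comp (hX j)]
  congr with ω
  rw [mul_sum, ← sum_neg_distrib, exp_sum,
    ENNReal.ofReal_prod_of_nonneg fun _ _ => (exp_pos _).le]

/-- Equality holds when `T ≥ 0`, by memorylessness. -/
lemma measure_add_lt_le_of_indepFun_expMeasure [IsProbabilityMeasure P] (hl : 0 < l)
    {T Y : Ω → ℝ} (hT : Measurable T) (hY : Measurable Y) (hind : IndepFun T Y P)
    (hYd : P.map Y = expMeasure l) (s : ℝ) :
    P {ω | T ω + s < Y ω}
      ≤ (∫⁻ ω, ENNReal.ofReal (exp (-(l * T ω))) ∂P) *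
        ENNReal.ofReal (exp (-(l * s))) := by
  have := isProbabilityMeasure_expMeasure hl
  have hC : MeasurableSet {p : ℝ × ℝ | p.1 + s < p.2} :=
    measurableSet_lt (by fun_prop) measurable_snd
  have hmap : P.map (fun ω => (T ω, Y ω)) = (P.map T).prod (expMeasure l) := by
    rw [← hYd]
    exact (indepFun_iff_map_prod_eq_prod_map_map hT.aemeasurable hY.aemeasurable).mp hind
  calc P {ω | T ω + s < Y ω}
        = (P.map T).prod (expMeasure l) {p : ℝ × ℝ | p.1 + s < p.2} := by
        rw [← hmap, Measure.map_apply (hT.prodMk hY) hC]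
        rfl
    _ = ∫⁻ t, expMeasure l (Ioi (t + s)) ∂P.map T := Measure.prod_apply hC
    _ ≤ ∫⁻ t, ENNReal.ofReal (exp (-(l * t))) * ENNReal.ofReal (exp (-(l * s)))
          ∂P.map T := by
        refine lintegral_mono fun t => (expMeasure_Ioi_le hl _).trans_eq ?_
        rw [← ENNReal.ofReal_mul (exp_pos _).le, ← exp_add]
        ring_nf
    _ = _ := by rw [lintegral_mul_const' _ _ ENNReal.ofReal_ne_top, lintegral_map (by fun_prop) hT]

lemma measure_sum_erase_add_lt_le [IsProbabilityMeasure P] (hl : 0 < l) {ι : Type*} [Fintype ι]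
    [DecidableEq ι] {X : ι → Ω → ℝ} (hX : ∀ i, Measurable (X i)) (hindep : iIndepFun X P)
    (hXd : ∀ i, P.map (X i) = expMeasure l) (s : ℝ) (i : ι) :
    P {ω | ∑ j ∈ univ.erase i, X j ω + s < X i ω}
      ≤ ENNReal.ofReal ((1/2) ^ (Fintype.card ι - 1) * exp (-(l * s))) := by
  have hLaplace (j : ι) :
      ∫⁻ ω, ENNReal.ofReal (exp (-(l * X j ω))) ∂P = ENNReal.ofReal (1/2) := by
    rw [← lintegral_map (f := fun x => ENNReal.ofReal (exp (-(l * x)))) (by fun_prop) (hX j),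
      hXd j, lintegral_exp_neg_mul_expMeasure hl (by linarith)]
    congr 1
    field_simp
    ring
  have hind : IndepFun (fun ω => ∑ j ∈ univ.erase i, X j ω) (X i) P := by
    simpa only [sum_fn] using hindep.indepFun_finsetSum_of_notMem hX (notMem_erase i _)
  refine (measure_add_lt_le_of_indepFun_expMeasure hl (by fun_prop) (hX i) hind (hXd i)
    s).trans_eq ?_
  rw [lintegral_exp_neg_mul_sum_of_iIndepFun hX hindep, prod_congr rfl fun j _ => hLaplace j,
    prod_const, card_erase_of_mem (mem_univ i), card_univ,
    ← ENNReal.ofReal_pow (by norm_num), ← ENNReal.ofReal_mul (by positivity)]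

end Independent

end ProbabilityTheory

lemma sum_le_sum_mul_div_two_mul_iSup {ι : Type*} [Fintype ι] [DecidableEq ι] [Nonempty ι]
    {x : ι → ℝ} {s : ℝ} (hx : ∀ i, 0 < x i)
    (h : ∀ i, x i ≤ ∑ j ∈ univ.erase i, x j + s) :
    ∑ i, x i ≤ (∑ i, x i) * (∑ i, x i + s) / (2 * ⨆ i, x i) := by
  obtain ⟨i, hi⟩ := exists_eq_ciSup_of_finite (f := x)
  rw [← hi, le_div_iff₀ (by linarith [hx i])]
  have hsplit := sum_erase_add univ x (mem_univ i)
  have hS : 0 ≤ ∑ i, x i := sum_nonneg fun j _ => (hx j).le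
  nlinarith [h i, mul_nonneg hS (by linarith [h i] : 0 ≤ ∑ j, x j + s - 2 * x i)]

/-- Let `J ≥ 3`, `λ > 0`, `s > 0`, and let `X_1, …, X_J` be
i.i.d. exponential with rate `λ`. With `S := ∑ i, X_i` and `M := max_i X_i`,
`P(S(S + s)/(2M) − S > s(5/4 − J/2)) ≥ 1 − J (1/2)^{J−1} e^{−λs}`. -/
theorem stmt_19 {Ω : Type*} [MeasurableSpace Ω] (P : Measure Ω) [IsProbabilityMeasure P]
    (J : ℕ) (hJ : 3 ≤ J) (l : ℝ) (hl : 0 < l) (s : ℝ) (hs : 0 < s)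
    (X : Fin J → Ω → ℝ) (hX : ∀ i, Measurable (X i))
    (hindep : iIndepFun X P)
    (hXd : ∀ i, P.map (X i) = expMeasure l)
    (S : Ω → ℝ) (hS : S = fun ω => ∑ i, X i ω)
    (M : Ω → ℝ) (hM : M = fun ω => ⨆ i, X i ω) :
    P {ω | S ω * (S ω + s) / (2 * M ω) - S ω > s * (5/4 - (J : ℝ)/2)}
      ≥ ENNReal.ofReal (1 - (J : ℝ) * (1/2)^(J - 1) * Real.exp (-(l * s))) := by
  subst hS hM
  have : Nonempty (Fin J) := ⟨⟨0, by omega⟩⟩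
  let B : Fin J → Set Ω := fun i => {ω | ∑ j ∈ univ.erase i, X j ω + s < X i ω}
  have hpos : ∀ᵐ ω ∂P, ∀ i, 0 < X i ω := ae_all_iff.2 fun i =>
    ae_of_ae_map (hX i).aemeasurable (by rw [hXd i]; exact ae_expMeasure_pos hl)
  have hneg : s * (5/4 - (J : ℝ)/2) < 0 := by
    have : (3 : ℝ) ≤ J := by exact_mod_cast hJ
    nlinarith
  have hgood : (⋃ i, B i)ᶜ ≤ᵐ[P]
      {ω | (∑ i, X i ω) * (∑ i, X i ω + s) / (2 * ⨆ i, X i ω) - ∑ i, X i ω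
        > s * (5/4 - (J : ℝ)/2)} := by
    filter_upwards [hpos] with ω hω hωB
    change ω ∈ (⋃ i, B i)ᶜ at hωB
    simp only [B, mem_compl_iff, mem_iUnion, not_exists, mem_ofPred_eq, not_lt] at hωB
    exact hneg.trans_le (sub_nonneg.2 (sum_le_sum_mul_div_two_mul_iSup hω hωB))
  calc ENNReal.ofReal (1 - (J : ℝ) * (1/2)^(J - 1) * exp (-(l * s)))
      = 1 - ∑ _i : Fin J, ENNReal.ofReal ((1/2) ^ (J - 1) * exp (-(l * s))) := by
        rw [sum_const, card_univ, Fintype.card_fin, nsmul_eq_mul,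
          ENNReal.ofReal_sub _ (by positivity), ENNReal.ofReal_one, mul_assoc,
          ENNReal.ofReal_mul (by positivity), ENNReal.ofReal_natCast]
    _ ≤ 1 - P (⋃ i, B i) :=
        tsub_le_tsub_left ((measure_iUnion_fintype_le _ _).trans (sum_le_sum fun i _ => by
          simpa only [Fintype.card_fin] using measure_sum_erase_add_lt_le hl hX hindep hXd s i)) 1
    _ = P (⋃ i, B i)ᶜ :=
        (prob_compl_eq_one_sub (.iUnion fun i => measurableSet_lt (by fun_prop) (hX i))).symm
    _ ≤ _ := measure_mono_ae hgood
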